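/- arXiv:1809.01588 — 2 statements merged into one kernel-verified Lean document; each statement's English description precedes it below -/
import Mathlib

section
/- Let C_axis ∈ ℝ^{m×m×m} be the axis core tensor. If X ∈ ℝ^{m×m} is an invertible matrix with [[C_axis; X, X, X]] = C_axis, then X = I, the identity matrix. That is, the stabilizer of C_axis under the congruence action by GL(m,ℝ) consists only of the identity. -/
open Matrix

/-- The axis core tensor over `ℝ`. -/
noncomputable def caxis (m : ℕ) : Fin m → Fin m → Fin m → ℝ := fun i j k =>
  if i < j ∧ j < k then 1
  else if (i < j ∧ j = k) ∨ (i = j ∧ j < k) then 1 / 2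
  else if i = j ∧ j = k then 1 / 6
  else 0

/-- The congruence action on an `m × m × m` tensor. -/
def congrAct3 {m : ℕ} (C : Fin m → Fin m → Fin m → ℝ)
    (X : Matrix (Fin m) (Fin m) ℝ) : Fin m → Fin m → Fin m → ℝ :=
  fun α β γ => ∑ i, ∑ j, ∑ k, C i j k * X α i * X β j * X γ k

lemma caxis_zero_of_not_le {m : ℕ} {i j k : Fin m} (h : ¬(i ≤ j ∧ j ≤ k)) :
    caxis m i j k = 0 := by
  unfold caxis
  split_ifs with h1 h2 h3
  · exact absurd ⟨le_of_lt h1.1, le_of_lt h1.2⟩ h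
  · rcases h2 with ⟨h2a, h2b⟩ | ⟨h2a, h2b⟩
    · exact absurd ⟨le_of_lt h2a, le_of_eq h2b⟩ h
    · exact absurd ⟨le_of_eq h2a, le_of_lt h2b⟩ h
  · exact absurd ⟨le_of_eq h3.1, le_of_eq h3.2⟩ h
  · rfl

lemma caxis_diag {m : ℕ} (a : Fin m) : caxis m a a a = 1 / 6 := by
  unfold caxis
  simp

lemma caxis_aab_of_lt {m : ℕ} {a b : Fin m} (h : a < b) : caxis m a a b = 1 / 2 := by
  unfold caxis
  rw [if_neg, if_pos]
  · exact Or.inr ⟨rfl, h⟩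
  · rintro ⟨h1, -⟩
    exact lt_irrefl a h1

lemma lt_of_caxis_aab {m : ℕ} {a b : Fin m} (h : caxis m a a b = 1 / 2) : a < b := by
  by_contra hab
  unfold caxis at h
  split_ifs at h with h1 h2 h3
  · exact lt_irrefl a h1.1
  · rcases h2 with ⟨h2a, -⟩ | ⟨-, h2b⟩
    · exact lt_irrefl a h2a
    · exact hab h2b
  · norm_num at h
  · norm_num at h

lemma sum_comm4 {M : Type*} [AddCommMonoid M] {n : ℕ}
    (F : Fin n → Fin n → Fin n → Fin n → M) :
    ∑ k, ∑ i, ∑ j, ∑ β, F k i j β = ∑ β, ∑ i, ∑ j, ∑ k, F k i j β := by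
  calc ∑ k, ∑ i, ∑ j, ∑ β, F k i j β
      = ∑ k, ∑ i, ∑ β, ∑ j, F k i j β :=
        Finset.sum_congr rfl fun _ _ => Finset.sum_congr rfl fun _ _ => Finset.sum_comm
    _ = ∑ k, ∑ β, ∑ i, ∑ j, F k i j β :=
        Finset.sum_congr rfl fun _ _ => Finset.sum_comm
    _ = ∑ β, ∑ k, ∑ i, ∑ j, F k i j β := Finset.sum_comm
    _ = ∑ β, ∑ i, ∑ k, ∑ j, F k i j β :=
        Finset.sum_congr rfl fun _ _ => Finset.sum_comm
    _ = ∑ β, ∑ i, ∑ j, ∑ k, F k i j β :=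
        Finset.sum_congr rfl fun _ _ => Finset.sum_congr rfl fun _ _ => Finset.sum_comm

/-- The middle slice matrix of the axis tensor, contracted with `w` in slot 2. -/
noncomputable def cmid (m : ℕ) (w : Fin m → ℝ) : Matrix (Fin m) (Fin m) ℝ :=
  Matrix.of fun i k => ∑ j, caxis m i j k * w j

lemma cmid_det {m : ℕ} (w : Fin m → ℝ) : (cmid m w).det = ∏ i, w i / 6 := by
  have htri : (cmid m w).BlockTriangular id := by
    intro i k hki
    show (∑ j, caxis m i j k * w j) = 0
    apply Finset.sum_eq_zero
    intro j _
    rw [caxis_zero_of_not_le, zero_mul]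
    rintro ⟨hij, hjk⟩
    exact absurd (le_trans hij hjk) (not_le.mpr hki)
  rw [Matrix.det_of_upperTriangular htri]
  refine Finset.prod_congr rfl fun i _ => ?_
  show (∑ j, caxis m i j i * w j) = w i / 6
  rw [Finset.sum_eq_single i]
  · rw [caxis_diag]; ring
  · intro j _ hji
    rw [caxis_zero_of_not_le, zero_mul]
    rintro ⟨hij, hji'⟩
    exact hji (le_antisymm hji' hij)
  · intro h
    exact absurd (Finset.mem_univ i) h

lemma slice_identity {m : ℕ} (X : Matrix (Fin m) (Fin m) ℝ)
    (hstab : congrAct3 (caxis m) X = caxis m) (w : Fin m → ℝ) :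
    X * cmid m (fun j => ∑ β, X β j * w β) * Xᵀ = cmid m w := by
  ext α γ
  have hE : ∀ β, (∑ i, ∑ j, ∑ k, caxis m i j k * X α i * X β j * X γ k) = caxis m α β γ :=
    fun β => congrFun (congrFun (congrFun hstab α) β) γ
  show (∑ k, (∑ i, X α i * (∑ j, caxis m i j k * (∑ β, X β j * w β))) * X γ k)
      = ∑ β, caxis m α β γ * w β
  have key : (∑ k, (∑ i, X α i * (∑ j, caxis m i j k * (∑ β, X β j * w β))) * X γ k)
      = ∑ β, (∑ i, ∑ j, ∑ k, caxis m i j k * X α i * X β j * X γ k) * w β := by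
    calc ∑ k, (∑ i, X α i * (∑ j, caxis m i j k * (∑ β, X β j * w β))) * X γ k
        = ∑ k, ∑ i, ∑ j, ∑ β, caxis m i j k * X α i * X β j * X γ k * w β := by
          simp only [Finset.sum_mul, Finset.mul_sum]
          refine Finset.sum_congr rfl fun k _ => ?_
          refine Finset.sum_congr rfl fun i _ => ?_
          refine Finset.sum_congr rfl fun j _ => ?_
          refine Finset.sum_congr rfl fun β _ => ?_
          ring
      _ = ∑ β, ∑ i, ∑ j, ∑ k, caxis m i j k * X α i * X β j * X γ k * w β :=
          sum_comm4 _
      _ = ∑ β, (∑ i, ∑ j, ∑ k, caxis m i j k * X α i * X β j * X γ k) * w β := by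
          refine Finset.sum_congr rfl fun β _ => ?_
          rw [Finset.sum_mul]
          refine Finset.sum_congr rfl fun i _ => ?_
          rw [Finset.sum_mul]
          refine Finset.sum_congr rfl fun j _ => ?_
          rw [Finset.sum_mul]
  rw [key]
  exact Finset.sum_congr rfl fun β _ => by rw [hE β]

/-- The stabilizer of the axis core tensor under the congruence action by
`GL(m,ℝ)` consists only of the identity matrix. -/
theorem axis_stabilizer_trivial_real (m : ℕ) (X : Matrix (Fin m) (Fin m) ℝ)
    (hX : IsUnit X) (hstab : congrAct3 (caxis m) X = caxis m) :
    X = 1 := by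
  classical
  have hdet : X.det ≠ 0 := ((Matrix.isUnit_iff_isUnit_det X).mp hX).ne_zero
  -- the key determinant identity
  have keyfun : ∀ w : Fin m → ℝ, X.det ^ 2 * ∏ i, (∑ β, X β i * w β) = ∏ β, w β := by
    intro w
    have h := congrArg Matrix.det (slice_identity X hstab w)
    rw [Matrix.det_mul, Matrix.det_mul, Matrix.det_transpose, cmid_det, cmid_det] at h
    have hprod : ∀ v : Fin m → ℝ, (∏ i, v i / 6) = (∏ i, v i) / 6 ^ m := by
      intro v
      rw [Finset.prod_div_distrib, Finset.prod_const]
      simp [Finset.card_univ]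
    rw [hprod, hprod] at h
    field_simp at h
    rw [pow_two]
    linarith [h]
  -- every column of X is supported on a single row
  have hcol : ∀ α, ∃ i, ∀ β, β ≠ α → X β i = 0 := by
    intro α
    set P : MvPolynomial (Fin m) ℝ :=
      MvPolynomial.C (X.det ^ 2) *
        ∏ i, (∑ β, MvPolynomial.C (X β i) * MvPolynomial.X β) with hP
    set Q : MvPolynomial (Fin m) ℝ := ∏ β, MvPolynomial.X β with hQ
    have hPQ : P = Q := by
      apply MvPolynomial.funext
      intro w
      simp only [hP, hQ, _root_.map_mul, map_prod, map_sum, MvPolynomial.eval_C,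
        MvPolynomial.eval_X]
      exact keyfun w
    set g : Fin m → MvPolynomial (Fin m) ℝ :=
      fun β => if β = α then 0 else MvPolynomial.X β with hgdef
    have hsub := congrArg (MvPolynomial.aeval g) hPQ
    have hQ0 : MvPolynomial.aeval g Q = 0 := by
      rw [hQ, map_prod]
      apply Finset.prod_eq_zero (Finset.mem_univ α)
      simp [hgdef]
    rw [hQ0, hP, _root_.map_mul, map_prod] at hsub
    have hC : (MvPolynomial.aeval g) (MvPolynomial.C (X.det ^ 2))
        = MvPolynomial.C (X.det ^ 2) := by
      simp
    rw [hC] at hsub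
    have hCne : (MvPolynomial.C (X.det ^ 2) : MvPolynomial (Fin m) ℝ) ≠ 0 := by
      simpa using pow_ne_zero 2 hdet
    have hprod0 :
        (∏ i, (MvPolynomial.aeval g) (∑ β, MvPolynomial.C (X β i) * MvPolynomial.X β))
        = 0 := by
      rcases mul_eq_zero.mp hsub with h | h
      · exact absurd h hCne
      · exact h
    obtain ⟨i, -, hi0⟩ := Finset.prod_eq_zero_iff.mp hprod0
    refine ⟨i, fun β₀ hβ₀ => ?_⟩
    have := congrArg (MvPolynomial.eval (Pi.single β₀ (1 : ℝ))) hi0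
    simp only [map_sum, _root_.map_mul, MvPolynomial.eval_C, map_zero] at this
    rw [Finset.sum_eq_single β₀] at this
    · simpa [hgdef, hβ₀] using this
    · intro β _ hβ
      rcases eq_or_ne β α with rfl | hne
      · simp [hgdef]
      · simp [hgdef, hne, Pi.single_eq_of_ne hβ]
    · intro h
      exact absurd (Finset.mem_univ β₀) h
  -- endgame
  have hE : ∀ α β γ,
      (∑ i, ∑ j, ∑ k, caxis m i j k * X α i * X β j * X γ k) = caxis m α β γ :=
    fun α β γ => congrFun (congrFun (congrFun hstab α) β) γ
  choose g hg using hcol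
  have hginj : Function.Injective g := by
    intro α α' hαα'
    by_contra hne
    apply hdet
    apply Matrix.det_eq_zero_of_column_eq_zero (g α)
    intro β
    rcases eq_or_ne β α with rfl | hβ
    · rw [hαα']
      exact hg α' β (fun h => hne h)
    · exact hg α β hβ
  have hgsurj : Function.Surjective g := Finite.surjective_of_injective hginj
  have hrow : ∀ α i, i ≠ g α → X α i = 0 := by
    intro α i hi
    obtain ⟨α', rfl⟩ := hgsurj i
    have hαα' : α ≠ α' := fun h => hi (by rw [h])
    exact hg α' α hαα'
  have hcollapse : ∀ α β γ,
      caxis m (g α) (g β) (g γ) * (X α (g α) * X β (g β) * X γ (g γ)) = caxis m α β γ := by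
    intro α β γ
    rw [← hE α β γ]
    rw [Finset.sum_eq_single (g α)]
    · rw [Finset.sum_eq_single (g β)]
      · rw [Finset.sum_eq_single (g γ)]
        · ring
        · intro k _ hk
          rw [hrow γ k hk]; ring
        · intro h; exact absurd (Finset.mem_univ _) h
      · intro j _ hj
        apply Finset.sum_eq_zero
        intro k _
        rw [hrow β j hj]; ring
      · intro h; exact absurd (Finset.mem_univ _) h
    · intro i _ hi
      apply Finset.sum_eq_zero
      intro j _
      apply Finset.sum_eq_zero
      intro k _
      rw [hrow α i hi]; ring
    · intro h; exact absurd (Finset.mem_univ _) h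
  have ht : ∀ α, X α (g α) = 1 := by
    intro α
    have h := hcollapse α α α
    rw [caxis_diag, caxis_diag] at h
    have h3 : X α (g α) ^ 3 = 1 ^ 3 := by
      have h' : (1 : ℝ) / 6 * (X α (g α) * X α (g α) * X α (g α)) = 1 / 6 := h
      nlinarith [h']
    exact (Odd.strictMono_pow (R := ℝ) (by decide : Odd 3)).injective h3
  have hmono : StrictMono g := by
    intro a b hab
    have h := hcollapse a a b
    rw [ht, ht, caxis_aab_of_lt hab] at h
    apply lt_of_caxis_aab
    rw [← h]; ring
  have hgid : ∀ α, g α = α := by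
    intro α
    have huniq : StrictMono.orderIsoOfSurjective g hmono hgsurj = OrderIso.refl (Fin m) :=
      Subsingleton.elim _ _
    calc g α = (StrictMono.orderIsoOfSurjective g hmono hgsurj) α :=
          (congrFun (StrictMono.coe_orderIsoOfSurjective g hmono hgsurj) α).symm
      _ = α := by rw [huniq]; rfl
  ext a b
  by_cases hab : a = b
  · subst hab
    rw [Matrix.one_apply_eq]
    have := ht a
    rwa [hgid] at this
  · rw [Matrix.one_apply_ne hab]
    apply hrow
    rw [hgid]
    exact fun h => hab h.symm
end

section
/- Let C ∈ ℝ^{m×m×m}, let v ∈ ℝ^m with ‖v‖ = 1, and let s ≥ 0 be such that ‖vᵀ C⁽ⁱ⁾‖ ≤ s in the Euclidean norm for i = 1, 2, 3, where vᵀ C⁽ⁱ⁾ is the row vector of length m² obtained by multiplying v against the i-th flattening of C. Set P = I − v vᵀ and S = [[C; P, P, P]]. Then ‖C − S‖_F ≤ 7s. -/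
/-!
Write `P₁, P₂, P₃` for `P = I − v vᵀ` acting on the first, second and third index, so that
`S = P₁P₂P₃C` and `C − S = (C − P₁C) + P₁(C − P₂C) + P₁P₂(C − P₃C)`. Each `Pₙ` is an orthogonal
projection, hence a contraction for the Frobenius norm, and `‖C − PₙC‖_F = ‖vᵀC⁽ⁿ⁾‖ ≤ s`.
So in fact `‖C − S‖_F ≤ 3s`.
-/

open Matrix

open Finset

section

variable {ι : Type*} [Fintype ι]

theorem sum_sq_sub_proj_eq {v : ι → ℝ} (hv : ∑ i, v i ^ 2 = 1) (x : ι → ℝ) :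
    ∑ a, (x a - v a * ∑ i, v i * x i) ^ 2 = ∑ a, x a ^ 2 - (∑ i, v i * x i) ^ 2 := by
  have cross : ∑ a, 2 * x a * (v a * ∑ i, v i * x i) = 2 * (∑ i, v i * x i) ^ 2 := by
    rw [show 2 * (∑ i, v i * x i) ^ 2 = (∑ i, v i * x i) * (2 * ∑ i, v i * x i) by ring,
      sum_mul]
    exact sum_congr rfl fun a _ => by ring
  simp only [sub_sq, sum_add_distrib, sum_sub_distrib, mul_pow, ← sum_mul, hv, cross]
  ring

theorem sum_sq_sub_proj_le {v : ι → ℝ} (hv : ∑ i, v i ^ 2 = 1) (x : ι → ℝ) :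
    ∑ a, (x a - v a * ∑ i, v i * x i) ^ 2 ≤ ∑ a, x a ^ 2 := by
  rw [sum_sq_sub_proj_eq hv]
  exact sub_le_self _ (sq_nonneg _)

theorem sum_sq_mul_const {v : ι → ℝ} (hv : ∑ i, v i ^ 2 = 1) (c : ℝ) :
    ∑ a, (v a * c) ^ 2 = c ^ 2 := by
  simp only [mul_pow, ← sum_mul, hv, one_mul]

theorem sum_sum_sum_rotate {α β γ M : Type*} [Fintype α] [Fintype β] [Fintype γ]
    [AddCommMonoid M] (f : α → β → γ → M) :
    ∑ a, ∑ b, ∑ c, f a b c = ∑ b, ∑ c, ∑ a, f a b c := by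
  rw [sum_comm]
  exact sum_congr rfl fun b _ => sum_comm

theorem AddGroupSeminorm.apply_sub_comp_le {E : Type*} [AddCommGroup E]
    (p : AddGroupSeminorm E) (f : E →+ E) (hf : ∀ y, p (f y) ≤ p y) (g : E → E) (x : E) :
    p (x - f (g x)) ≤ p (x - f x) + p (x - g x) := by
  have split : x - f (g x) = (x - f x) + f (x - g x) := by
    rw [map_sub]
    abel
  rw [split]
  exact (map_add_le_add p _ _).trans (add_le_add_right (hf _) _)

noncomputable def flattenHom : (ι → ι → ι → ℝ) →+ EuclideanSpace ℝ (ι × ι × ι) where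
  toFun T := WithLp.toLp 2 fun p => T p.1 p.2.1 p.2.2
  map_zero' := rfl
  map_add' _ _ := rfl

noncomputable def frobSeminorm : AddGroupSeminorm (ι → ι → ι → ℝ) :=
  (normAddGroupSeminorm _).comp flattenHom

theorem frobSeminorm_apply (T : ι → ι → ι → ℝ) :
    frobSeminorm T = √(∑ i, ∑ j, ∑ k, T i j k ^ 2) := by
  simp only [frobSeminorm, AddGroupSeminorm.comp_apply, coe_normAddGroupSeminorm, flattenHom,
    EuclideanSpace.norm_eq, Fintype.sum_prod_type, Real.norm_eq_abs, sq_abs]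
  rfl

theorem frobSeminorm_le_of_sum_sq_le {S T : ι → ι → ι → ℝ}
    (h : ∑ i, ∑ j, ∑ k, S i j k ^ 2 ≤ ∑ i, ∑ j, ∑ k, T i j k ^ 2) :
    frobSeminorm S ≤ frobSeminorm T := by
  simpa only [frobSeminorm_apply] using Real.sqrt_le_sqrt h

def modeProd1 (X : Matrix ι ι ℝ) : (ι → ι → ι → ℝ) →+ (ι → ι → ι → ℝ) where
  toFun T α j k := ∑ i, X α i * T i j k
  map_zero' := by ext; simp
  map_add' S T := by ext; simp [mul_add, sum_add_distrib]

def modeProd2 (X : Matrix ι ι ℝ) : (ι → ι → ι → ℝ) →+ (ι → ι → ι → ℝ) where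
  toFun T i β k := ∑ j, X β j * T i j k
  map_zero' := by ext; simp
  map_add' S T := by ext; simp [mul_add, sum_add_distrib]

def modeProd3 (X : Matrix ι ι ℝ) : (ι → ι → ι → ℝ) →+ (ι → ι → ι → ℝ) where
  toFun T i j γ := ∑ k, X γ k * T i j k
  map_zero' := by ext; simp
  map_add' S T := by ext; simp [mul_add, sum_add_distrib]

section projection

variable [DecidableEq ι] (v : ι → ℝ) (T : ι → ι → ι → ℝ)

theorem modeProd1_one_sub_vecMulVec_apply (α j k : ι) :
    modeProd1 (1 - vecMulVec v v) T α j k = T α j k - v α * ∑ i, v i * T i j k := by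
  simp [modeProd1, sub_mul, sum_sub_distrib, one_apply, vecMulVec_apply, mul_sum, mul_assoc]

theorem modeProd2_one_sub_vecMulVec_apply (i β k : ι) :
    modeProd2 (1 - vecMulVec v v) T i β k = T i β k - v β * ∑ j, v j * T i j k := by
  simp [modeProd2, sub_mul, sum_sub_distrib, one_apply, vecMulVec_apply, mul_sum, mul_assoc]

theorem modeProd3_one_sub_vecMulVec_apply (i j γ : ι) :
    modeProd3 (1 - vecMulVec v v) T i j γ = T i j γ - v γ * ∑ k, v k * T i j k := by
  simp [modeProd3, sub_mul, sum_sub_distrib, one_apply, vecMulVec_apply, mul_sum, mul_assoc]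

variable {v}

theorem frobSeminorm_modeProd1_one_sub_vecMulVec_le (hv : ∑ i, v i ^ 2 = 1) :
    frobSeminorm (modeProd1 (1 - vecMulVec v v) T) ≤ frobSeminorm T := by
  refine frobSeminorm_le_of_sum_sq_le ?_
  simp only [modeProd1_one_sub_vecMulVec_apply]
  refine (sum_sum_sum_rotate _).trans_le (le_of_le_of_eq ?_ (sum_sum_sum_rotate _).symm)
  exact sum_le_sum fun j _ => sum_le_sum fun k _ => sum_sq_sub_proj_le hv _

theorem frobSeminorm_modeProd2_one_sub_vecMulVec_le (hv : ∑ i, v i ^ 2 = 1) :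
    frobSeminorm (modeProd2 (1 - vecMulVec v v) T) ≤ frobSeminorm T := by
  refine frobSeminorm_le_of_sum_sq_le (sum_le_sum fun i _ => ?_)
  simp only [modeProd2_one_sub_vecMulVec_apply]
  rw [sum_comm, sum_comm (γ := ι) (f := fun j k => T i j k ^ 2)]
  exact sum_le_sum fun k _ => sum_sq_sub_proj_le hv _

theorem frobSeminorm_sub_modeProd1_one_sub_vecMulVec (hv : ∑ i, v i ^ 2 = 1) :
    frobSeminorm (T - modeProd1 (1 - vecMulVec v v) T) =
      √(∑ j, ∑ k, (∑ i, v i * T i j k) ^ 2) := by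
  simp only [frobSeminorm_apply, Pi.sub_apply, modeProd1_one_sub_vecMulVec_apply,
    sub_sub_cancel]
  rw [sum_sum_sum_rotate]
  simp only [sum_sq_mul_const hv]

theorem frobSeminorm_sub_modeProd2_one_sub_vecMulVec (hv : ∑ i, v i ^ 2 = 1) :
    frobSeminorm (T - modeProd2 (1 - vecMulVec v v) T) =
      √(∑ i, ∑ k, (∑ j, v j * T i j k) ^ 2) := by
  simp only [frobSeminorm_apply, Pi.sub_apply, modeProd2_one_sub_vecMulVec_apply,
    sub_sub_cancel]
  congr 1
  refine sum_congr rfl fun i _ => ?_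
  rw [sum_comm]
  simp only [sum_sq_mul_const hv]

theorem frobSeminorm_sub_modeProd3_one_sub_vecMulVec (hv : ∑ i, v i ^ 2 = 1) :
    frobSeminorm (T - modeProd3 (1 - vecMulVec v v) T) =
      √(∑ i, ∑ j, (∑ k, v k * T i j k) ^ 2) := by
  simp only [frobSeminorm_apply, Pi.sub_apply, modeProd3_one_sub_vecMulVec_apply,
    sub_sub_cancel, sum_sq_mul_const hv]

end projection

end

theorem congrAct3_eq_modeProd {m : ℕ} (C : Fin m → Fin m → Fin m → ℝ)
    (X : Matrix (Fin m) (Fin m) ℝ) :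
    congrAct3 C X = modeProd1 X (modeProd2 X (modeProd3 X C)) := by
  ext α β γ
  simp only [congrAct3, modeProd1, modeProd2, modeProd3, AddMonoidHom.coe_mk, ZeroHom.coe_mk,
    mul_sum]
  exact sum_congr rfl fun i _ => sum_congr rfl fun j _ => sum_congr rfl fun k _ => by ring

/-- If `v` is a unit vector with `‖vᵀ C⁽ⁱ⁾‖ ≤ s` for all three flattenings of `C`,
and `P = I − v vᵀ`, `S = [[C; P, P, P]]`, then `‖C − S‖_F ≤ 7s`. -/
theorem distance_to_projected_tensor_le (m : ℕ)
    (C : Fin m → Fin m → Fin m → ℝ) (v : EuclideanSpace ℝ (Fin m)) (hv : ‖v‖ = 1)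
    (s : ℝ) (hs : 0 ≤ s)
    (h1 : Real.sqrt (∑ j, ∑ k, (∑ i, v i * C i j k) ^ 2) ≤ s)
    (h2 : Real.sqrt (∑ i, ∑ k, (∑ j, v j * C i j k) ^ 2) ≤ s)
    (h3 : Real.sqrt (∑ i, ∑ j, (∑ k, v k * C i j k) ^ 2) ≤ s) :
    Real.sqrt (∑ i, ∑ j, ∑ k,
        (C i j k - congrAct3 C
          (1 - Matrix.vecMulVec (fun i => v i) (fun j => v j)) i j k) ^ 2)
      ≤ 7 * s := by
  set P := 1 - Matrix.vecMulVec (fun i => v i) (fun j => v j)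
  have hv' : ∑ i, v i ^ 2 = 1 := by
    rw [EuclideanSpace.norm_eq, Real.sqrt_eq_one] at hv
    simpa only [Real.norm_eq_abs, sq_abs] using hv
  have telescope : frobSeminorm (C - congrAct3 C P) ≤ frobSeminorm (C - modeProd1 P C) +
      (frobSeminorm (C - modeProd2 P C) + frobSeminorm (C - modeProd3 P C)) := by
    rw [congrAct3_eq_modeProd]
    refine (frobSeminorm.apply_sub_comp_le (modeProd1 P)
      (frobSeminorm_modeProd1_one_sub_vecMulVec_le · hv') (fun T => modeProd2 P (modeProd3 P T))
      C).trans (add_le_add_right ?_ _)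
    exact frobSeminorm.apply_sub_comp_le (modeProd2 P)
      (frobSeminorm_modeProd2_one_sub_vecMulVec_le · hv') (modeProd3 P) C
  rw [frobSeminorm_sub_modeProd1_one_sub_vecMulVec C hv',
    frobSeminorm_sub_modeProd2_one_sub_vecMulVec C hv',
    frobSeminorm_sub_modeProd3_one_sub_vecMulVec C hv', frobSeminorm_apply] at telescope
  simp only [Pi.sub_apply] at telescope
  linarith
end
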